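/- For a dimension type D with dim D = n < ∞, one has dim(D ⊞ D) = 2n if and only if there exists F ∈ primes ∪ {0} with field value of D at F equal to n. (Arithmetic form of the characterization of standard compacta.) -/

import Mathlib

/-- Signs (decorations): `-`, empty (`zero`), `+`. -/
inductive Sign : Type
  | neg | zero | pos
deriving DecidableEq

/-- The sign multiplication ⊗. -/
def Sign.mul : Sign → Sign → Sign
  | s, .zero => s
  | .zero, s => s
  | .pos, .pos => .pos
  | .neg, .neg => .neg
  | .pos, .neg => .neg
  | .neg, .pos => .neg

def Sign.toInt : Sign → ℤ
  | .neg => -1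
  | .zero => 0
  | .pos => 1

/-- The involution on signs exchanging + and -. -/
def Sign.star : Sign → Sign
  | .pos => .neg
  | .neg => .pos
  | .zero => .zero

/-- Decorated natural numbers: a base and a decoration. -/
abbrev DecNat := ℕ × Sign

/-- Lexicographic order: bases first, then decorations with `- < 0 < +`. -/
def DecNat.le (a b : DecNat) : Prop :=
  a.1 < b.1 ∨ (a.1 = b.1 ∧ a.2.toInt ≤ b.2.toInt)

def DecNat.lt (a b : DecNat) : Prop :=
  a.1 < b.1 ∨ (a.1 = b.1 ∧ a.2.toInt < b.2.toInt)

/-- The involution * on decorated naturals. -/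
def DecNat.star (a : DecNat) : DecNat := (a.1, a.2.star)

/-- The operation ⊞: add bases, multiply decorations. -/
def DecNat.bplus (a b : DecNat) : DecNat := (a.1 + b.1, a.2.mul b.2)

/-- The operation ⊕: `a ⊕ b = (a* ⊞ b*)*`. -/
def DecNat.oplus (a b : DecNat) : DecNat := ((a.star.bplus b.star)).star

/-- Adding 1 to the base, keeping the decoration. -/
def DecNat.addOne (a : DecNat) : DecNat := (a.1 + 1, a.2)

/-- `dim_{Z_(p)}` of a dimension type `D` (a function from primes ∪ {0},
encoded as ℕ, to decorated naturals, undecorated at 0). -/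
def dimZp (D : ℕ → DecNat) (p : ℕ) : ℕ :=
  match (D p).2 with
  | .pos => max (D 0).1 ((D p).1 + 1)
  | .neg => max (D 0).1 (D p).1
  | .zero => (D p).1

/-- `dim D = sup over primes p of dim_{Z_(p)} D`, valued in ℕ∞. -/
noncomputable def dimD (D : ℕ → DecNat) : ℕ∞ :=
  ⨆ p : {p : ℕ // p.Prime}, (dimZp D p.1 : ℕ∞)

/-- The maximal Boltyanskii dimension type `B n`:
`B n (p) = (n-1)⁺` at primes, `B n (0) = n-1` undecorated. -/
def Bdim (n : ℕ) : ℕ → DecNat :=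
  fun x => if x = 0 then (n - 1, Sign.zero) else (n - 1, Sign.pos)


/-!
Write `f p = dim_{Z_(p)} D` and `g p = dim_{Z_(p)} (D ⊞ D)`. Since `D ⊞ D` doubles every base and
keeps every decoration, `2 f p - 1 ≤ g p ≤ 2 f p` at every prime: the only loss is the `+1` of a
`+` decoration, which is not doubled. So `g p = 2 f p` exactly when the maximum defining `f p` is
attained by a field value, `base (D p)` or (if `D p` is decorated) `base (D 0)`.
Taking suprema, `dim (D ⊞ D)` is `2n - 1` or `2n`, and it is `2n` iff some field value equals `n`.
-/

lemma ENat.iSup_natCast_eq_natCast_iff {ι : Type*} [Nonempty ι] {f : ι → ℕ} {n : ℕ} :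
    ⨆ i, (f i : ℕ∞) = n ↔ (∀ i, f i ≤ n) ∧ ∃ i, f i = n := by
  constructor
  · intro h
    have hle : ∀ i, f i ≤ n := fun i => by exact_mod_cast h ▸ le_iSup (fun j => (f j : ℕ∞)) i
    obtain ⟨i, hi⟩ := ENat.exists_eq_iSup_of_lt_top (h ▸ ENat.natCast_lt_top n)
    exact ⟨hle, i, by exact_mod_cast hi.trans h⟩
  · rintro ⟨hle, i, rfl⟩
    exact le_antisymm (iSup_le fun j => by exact_mod_cast hle j) (le_iSup (fun j => (f j : ℕ∞)) i)

lemma dimD_eq_natCast_iff (D : ℕ → DecNat) (n : ℕ) :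
    dimD D = n ↔ (∀ p, p.Prime → dimZp D p ≤ n) ∧ ∃ p, p.Prime ∧ dimZp D p = n := by
  have : Nonempty {p : ℕ // p.Prime} := ⟨⟨2, Nat.prime_two⟩⟩
  simp only [dimD, ENat.iSup_natCast_eq_natCast_iff, Subtype.forall, Subtype.exists, exists_prop]

section DimZp

variable (D : ℕ → DecNat) (p : ℕ)

lemma dimZp_of_sign_eq_zero (h : (D p).2 = .zero) : dimZp D p = (D p).1 := by
  simp [dimZp, h]

lemma dimZp_bplus_self_le : dimZp (fun x => (D x).bplus (D x)) p ≤ 2 * dimZp D p := by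
  cases h : (D p).2 <;> simp only [dimZp, DecNat.bplus, Sign.mul, h] <;> omega

lemma two_mul_dimZp_sub_one_le : 2 * dimZp D p - 1 ≤ dimZp (fun x => (D x).bplus (D x)) p := by
  cases h : (D p).2 <;> simp only [dimZp, DecNat.bplus, Sign.mul, h] <;> omega

lemma dimZp_bplus_self_eq_two_mul_iff {n : ℕ} (hn : dimZp D p ≤ n) :
    dimZp (fun x => (D x).bplus (D x)) p = 2 * n ↔
      (D p).1 = n ∨ ((D p).2 ≠ .zero ∧ (D 0).1 = n) := by
  cases h : (D p).2 <;>
    simp only [dimZp, DecNat.bplus, Sign.mul, h, ne_eq, reduceCtorEq, not_false_eq_true,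
      not_true_eq_false, true_and, false_and, or_false] at hn ⊢ <;>
    omega

end DimZp

theorem standard_characterization_general (D : ℕ → DecNat)
    (n : ℕ) (hdim : dimD D = (n : ℕ∞)) :
    (dimD (fun x => (D x).bplus (D x)) = ((2 * n : ℕ) : ℕ∞) ↔
      ∃ F : ℕ, (F = 0 ∨ F.Prime) ∧ (D F).1 = n) ∧
    (dimD (fun x => (D x).bplus (D x)) = ((2 * n - 1 : ℕ) : ℕ∞) ∨
      dimD (fun x => (D x).bplus (D x)) = ((2 * n : ℕ) : ℕ∞)) := by
  set E : ℕ → DecNat := fun x => (D x).bplus (D x)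
  obtain ⟨hle, q, hq, hqn⟩ := (dimD_eq_natCast_iff D n).1 hdim
  have hEle : ∀ p, p.Prime → dimZp E p ≤ 2 * n := fun p hp =>
    (dimZp_bplus_self_le D p).trans (Nat.mul_le_mul_left 2 (hle p hp))
  have hE2n : dimD E = ((2 * n : ℕ) : ℕ∞) ↔ ∃ p, p.Prime ∧ dimZp E p = 2 * n := by
    rw [dimD_eq_natCast_iff]
    exact and_iff_right hEle
  refine ⟨hE2n.trans ⟨?_, ?_⟩, ?_⟩
  · rintro ⟨p, hp, hpn⟩
    rcases (dimZp_bplus_self_eq_two_mul_iff D p (hle p hp)).1 hpn with hp' | ⟨-, h0⟩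
    exacts [⟨p, Or.inr hp, hp'⟩, ⟨0, Or.inl rfl, h0⟩]
  · rintro ⟨F, rfl | hF, hFn⟩
    · refine ⟨q, hq, (dimZp_bplus_self_eq_two_mul_iff D q hqn.le).2 ?_⟩
      by_cases hs : (D q).2 = .zero
      exacts [.inl (dimZp_of_sign_eq_zero D q hs ▸ hqn), .inr ⟨hs, hFn⟩]
    · exact ⟨F, hF, (dimZp_bplus_self_eq_two_mul_iff D F (hle F hF)).2 (.inl hFn)⟩
  · by_cases h : ∃ p, p.Prime ∧ dimZp E p = 2 * n
    · exact .inr (hE2n.2 h)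
    · push Not at h
      have hlt : ∀ p, p.Prime → dimZp E p ≤ 2 * n - 1 := fun p hp =>
        Nat.le_sub_one_of_lt ((hEle p hp).lt_of_ne (h p hp))
      refine .inl ((dimD_eq_natCast_iff E _).2 ⟨hlt, q, hq, ?_⟩)
      exact le_antisymm (hlt q hq) (hqn ▸ two_mul_dimZp_sub_one_le D q)

theorem standard_characterization (D : ℕ → DecNat) (h0 : (D 0).2 = Sign.zero)
    (n : ℕ) (hdim : dimD D = (n : ℕ∞)) :
    (dimD (fun x => (D x).bplus (D x)) = ((2 * n : ℕ) : ℕ∞) ↔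
      ∃ F : ℕ, (F = 0 ∨ F.Prime) ∧ (D F).1 = n) ∧
    (dimD (fun x => (D x).bplus (D x)) = ((2 * n - 1 : ℕ) : ℕ∞) ∨
      dimD (fun x => (D x).bplus (D x)) = ((2 * n : ℕ) : ℕ∞)) :=
  standard_characterization_general D n hdim
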